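/- arXiv:2411.08141 — 7 statements merged into one kernel-verified Lean document; each statement's English description precedes it below -/
import Mathlib

section
/- Misspecification error bound: Let S ⊆ A ⊆ V \ (X ∪ Y) be finite discrete variables, and suppose Δ_{X ⊥ (A\S) | S} := Σ_{a} P(x', s)·|P(a\s | s, x') − P(a\s | s)| summed over all values a of A and x' of X is at most ε. Let α_S := min_s P(x | s) > 0. Then |T_S − T_A| ≤ ε/α_S, where T_B := Σ_b P(y | b, x)·P(b). -/
/-- Misspecification error bound. If `S` is an ε-Markov blanket of
`X` with respect to `A = S ∪ R` (i.e. `Δ_{X ⊥ R | S} ≤ ε`), and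
`α_S = min_s P(x|s) > 0`, then `|T_S − T_A| ≤ ε/α_S`. Here the alphabet of `A`
is modeled as the product of the alphabet `S` of the blanket and `R` of the
rest `A \ S`. -/
theorem misspecification_error_bound
    {S R X Y : Type*} [Fintype S] [Fintype R] [Fintype X] [Fintype Y] [Nonempty S]
    (p : S → R → X → Y → ℝ) (x : X) (y : Y) (ε : ℝ)
    (hp : ∀ s r x' y', 0 ≤ p s r x' y')
    (hsum : ∑ s, ∑ r, ∑ x', ∑ y', p s r x' y' = 1)
    (hSx : ∀ s x', 0 < ∑ r, ∑ y', p s r x' y')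
    (hS : ∀ s, 0 < ∑ r, ∑ x', ∑ y', p s r x' y')
    (hSRx : ∀ s r, 0 < ∑ y', p s r x y')
    (hSR : ∀ s r, 0 < ∑ x', ∑ y', p s r x' y')
    (hΔ : (∑ s, ∑ r, ∑ x',
        (∑ r', ∑ y', p s r' x' y') *
          |(∑ y', p s r x' y') / (∑ r', ∑ y', p s r' x' y') -
            (∑ x'', ∑ y', p s r x'' y') /
              (∑ r', ∑ x'', ∑ y', p s r' x'' y')|) ≤ ε)
    (hα : 0 < Finset.univ.inf' Finset.univ_nonempty
        (fun s => (∑ r, ∑ y', p s r x y') / (∑ r, ∑ x', ∑ y', p s r x' y'))) :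
    |(∑ s, ((∑ r, p s r x y) / (∑ r, ∑ y', p s r x y')) *
        (∑ r, ∑ x', ∑ y', p s r x' y')) -
      (∑ s, ∑ r, (p s r x y / (∑ y', p s r x y')) *
        (∑ x', ∑ y', p s r x' y'))| ≤
    ε / Finset.univ.inf' Finset.univ_nonempty
        (fun s => (∑ r, ∑ y', p s r x y') / (∑ r, ∑ x', ∑ y', p s r x' y')) := by
  rw [le_div_iff₀ hα]
  have hQ : ∀ s r, (∑ y', p s r x y') ≠ 0 := fun s r => (hSRx s r).ne'
  have hPs : ∀ s, (∑ r, ∑ x', ∑ y', p s r x' y') ≠ 0 := fun s => (hS s).ne'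
  -- abbreviations (only informal): f s r = p s r x y / Q, g = Q/Psx, h = Psr/Ps
  have key : (∑ s, ((∑ r, p s r x y) / (∑ r, ∑ y', p s r x y')) *
        (∑ r, ∑ x', ∑ y', p s r x' y')) -
      (∑ s, ∑ r, (p s r x y / (∑ y', p s r x y')) * (∑ x', ∑ y', p s r x' y'))
      = ∑ s, ∑ r, (p s r x y / (∑ y', p s r x y')) *
          ((∑ y', p s r x y') / (∑ r', ∑ y', p s r' x y') -
           (∑ x', ∑ y', p s r x' y') / (∑ r', ∑ x', ∑ y', p s r' x' y')) *
          (∑ r', ∑ x', ∑ y', p s r' x' y') := by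
    rw [← Finset.sum_sub_distrib]
    refine Finset.sum_congr rfl fun s _ => ?_
    have h1 : ((∑ r, p s r x y) / (∑ r, ∑ y', p s r x y')) *
        (∑ r, ∑ x', ∑ y', p s r x' y')
        = ∑ r, (p s r x y / (∑ y', p s r x y')) *
            ((∑ y', p s r x y') / (∑ r', ∑ y', p s r' x y')) *
            (∑ r', ∑ x', ∑ y', p s r' x' y') := by
      rw [← Finset.sum_mul]
      congr 1
      rw [Finset.sum_div]
      refine Finset.sum_congr rfl fun r _ => ?_
      rw [div_mul_div_comm]
      rw [mul_comm (∑ y', p s r x y') (∑ r', ∑ y', p s r' x y'),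
        mul_div_mul_right _ _ (hQ s r)]
    rw [h1, ← Finset.sum_sub_distrib]
    refine Finset.sum_congr rfl fun r _ => ?_
    have hc : (∑ x', ∑ y', p s r x' y') / (∑ r', ∑ x', ∑ y', p s r' x' y') *
        (∑ r', ∑ x', ∑ y', p s r' x' y') = ∑ x', ∑ y', p s r x' y' :=
      div_mul_cancel₀ _ (hPs s)
    linear_combination (p s r x y / (∑ y', p s r x y')) * hc
  rw [key]
  set α := Finset.univ.inf' Finset.univ_nonempty
      (fun s => (∑ r, ∑ y', p s r x y') / (∑ r, ∑ x', ∑ y', p s r x' y')) with hαdef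
  have hf01 : ∀ s r, |p s r x y / (∑ y', p s r x y')| ≤ 1 := by
    intro s r
    rw [abs_of_nonneg (div_nonneg (hp s r x y) (hSRx s r).le)]
    rw [div_le_one (hSRx s r)]
    exact Finset.single_le_sum (fun y' _ => hp s r x y') (Finset.mem_univ y)
  calc |∑ s, ∑ r, (p s r x y / (∑ y', p s r x y')) *
          ((∑ y', p s r x y') / (∑ r', ∑ y', p s r' x y') -
           (∑ x', ∑ y', p s r x' y') / (∑ r', ∑ x', ∑ y', p s r' x' y')) *
          (∑ r', ∑ x', ∑ y', p s r' x' y')| * α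
      ≤ (∑ s, ∑ r,
          |(∑ y', p s r x y') / (∑ r', ∑ y', p s r' x y') -
           (∑ x', ∑ y', p s r x' y') / (∑ r', ∑ x', ∑ y', p s r' x' y')| *
          (∑ r', ∑ x', ∑ y', p s r' x' y')) * α := by
        refine mul_le_mul_of_nonneg_right ?_ hα.le
        refine (Finset.abs_sum_le_sum_abs _ _).trans ?_
        refine Finset.sum_le_sum fun s _ => ?_
        refine (Finset.abs_sum_le_sum_abs _ _).trans ?_
        refine Finset.sum_le_sum fun r _ => ?_
        rw [abs_mul, abs_mul, abs_of_nonneg (hS s).le]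
        refine mul_le_mul_of_nonneg_right ?_ (hS s).le
        calc |p s r x y / (∑ y', p s r x y')| * _ ≤ 1 * _ :=
              mul_le_mul_of_nonneg_right (hf01 s r) (abs_nonneg _)
          _ = _ := one_mul _
    _ = ∑ s, ∑ r, (α * (∑ r', ∑ x', ∑ y', p s r' x' y')) *
          |(∑ y', p s r x y') / (∑ r', ∑ y', p s r' x y') -
           (∑ x', ∑ y', p s r x' y') / (∑ r', ∑ x', ∑ y', p s r' x' y')| := by
        rw [Finset.sum_mul]
        refine Finset.sum_congr rfl fun s _ => ?_
        rw [Finset.sum_mul]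
        exact Finset.sum_congr rfl fun r _ => by ring
    _ ≤ ∑ s, ∑ r, (∑ r', ∑ y', p s r' x y') *
          |(∑ y', p s r x y') / (∑ r', ∑ y', p s r' x y') -
           (∑ x', ∑ y', p s r x' y') / (∑ r', ∑ x', ∑ y', p s r' x' y')| := by
        refine Finset.sum_le_sum fun s _ => Finset.sum_le_sum fun r _ => ?_
        refine mul_le_mul_of_nonneg_right ?_ (abs_nonneg _)
        have h2 : α ≤ (∑ r, ∑ y', p s r x y') / (∑ r, ∑ x', ∑ y', p s r x' y') :=
          Finset.inf'_le _ (Finset.mem_univ s)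
        calc α * (∑ r', ∑ x', ∑ y', p s r' x' y')
            ≤ ((∑ r, ∑ y', p s r x y') / (∑ r, ∑ x', ∑ y', p s r x' y')) *
              (∑ r', ∑ x', ∑ y', p s r' x' y') :=
              mul_le_mul_of_nonneg_right h2 (hS s).le
          _ = ∑ r', ∑ y', p s r' x y' := div_mul_cancel₀ _ (hPs s)
    _ ≤ ∑ s, ∑ r, ∑ x',
        (∑ r', ∑ y', p s r' x' y') *
          |(∑ y', p s r x' y') / (∑ r', ∑ y', p s r' x' y') -
            (∑ x'', ∑ y', p s r x'' y') /
              (∑ r', ∑ x'', ∑ y', p s r' x'' y')| := by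
        refine Finset.sum_le_sum fun s _ => Finset.sum_le_sum fun r _ => ?_
        exact Finset.single_le_sum
          (f := fun x' => (∑ r', ∑ y', p s r' x' y') *
            |(∑ y', p s r x' y') / (∑ r', ∑ y', p s r' x' y') -
              (∑ x'', ∑ y', p s r x'' y') / (∑ r', ∑ x'', ∑ y', p s r' x'' y')|)
          (fun x' _ => mul_nonneg (hSx s x').le (abs_nonneg _)) (Finset.mem_univ x)
    _ ≤ ε := hΔ
end

section
/- Misspecification error lower bound: For every ε and α with 0 ≤ √ε ≤ α ≤ 1/2, there exists a joint distribution P over four binary variables (A, B, X, Y) such that, with S = {A} and Z = {A, B}: (i) Δ_{X ⊥ B | A} = Σ_{x,a,b} P(a)·|P(x,b|a) − P(x|a)P(b|a)| ≤ ε; (ii) min_a P(X = 0 | A = a) ≥ α/2 (assuming ε ≤ α/2); and (iii) |T_S − T_Z| ≥ ε/(16α), where T_S = Σ_a P(a)·P(Y=1 | X=0, a) and T_Z = Σ_{a,b} P(a,b)·P(Y=1 | X=0, a, b). -/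
/-- Misspecification error lower bound. For `0 ≤ √ε ≤ α ≤ 1/2`
(and `ε ≤ α/2`) there is a joint distribution `p` over four binary variables
`(A, B, X, Y)` such that, with `S = {A}` and `Z = {A,B}`:
(i) `Δ_{X ⊥ B | A} ≤ ε`; (ii) `min_a P(X=0 | A=a) ≥ α/2`; and
(iii) `|T_S − T_Z| ≥ ε/(16α)` (with `x = 0` and `y = 1` as the query values). -/
theorem misspecification_error_lower_bound
    (ε α : ℝ) (hε : 0 ≤ ε) (h1 : Real.sqrt ε ≤ α) (h2 : α ≤ 1 / 2)
    (h3 : ε ≤ α / 2) :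
    ∃ p : Bool → Bool → Bool → Bool → ℝ,
      (∀ a b xv yv, 0 ≤ p a b xv yv) ∧
      (∑ a, ∑ b, ∑ xv, ∑ yv, p a b xv yv = 1) ∧
      -- (i) Δ_{X ⊥ B | A} ≤ ε
      (∑ xv, ∑ a, ∑ b,
        (∑ b', ∑ x', ∑ y', p a b' x' y') *
          |(∑ y', p a b xv y') / (∑ b', ∑ x', ∑ y', p a b' x' y') -
            ((∑ b', ∑ y', p a b' xv y') / (∑ b', ∑ x', ∑ y', p a b' x' y')) *
            ((∑ x', ∑ y', p a b x' y') / (∑ b', ∑ x', ∑ y', p a b' x' y'))| ≤ ε) ∧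
      -- (ii) min_a P(X = 0 | A = a) ≥ α/2
      (∀ a, α / 2 ≤
        (∑ b, ∑ y', p a b false y') / (∑ b, ∑ x', ∑ y', p a b x' y')) ∧
      -- (iii) |T_S − T_Z| ≥ ε/(16α)
      (ε / (16 * α) ≤
        |(∑ a, (∑ b, ∑ x', ∑ y', p a b x' y') *
            ((∑ b, p a b false true) / (∑ b, ∑ y', p a b false y'))) -
          (∑ a, ∑ b, (∑ x', ∑ y', p a b x' y') *
            (p a b false true / (∑ y', p a b false y')))|) := by
  have hα : 0 ≤ α := le_trans (Real.sqrt_nonneg ε) h1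
  refine ⟨fun _ b xv yv =>
    match b, xv, yv with
    | false, false, true => (α/2 + ε/4)/2
    | true,  false, false => (α/2 - ε/4)/2
    | false, true,  false => ((1-α)/2 - ε/4)/2
    | true,  true,  false => ((1-α)/2 + ε/4)/2
    | _, _, _ => 0, ?_, ?_, ?_, ?_, ?_⟩
  · rintro a (_|_) (_|_) (_|_) <;> simp <;> linarith
  · simp only [Fintype.sum_bool]; ring
  · simp only [Fintype.sum_bool]
    ring_nf
    rw [abs_mul, abs_mul, abs_of_nonneg hε]
    rw [show |((1:ℝ)/4)| = 1/4 by norm_num, show |(-1:ℝ)/4| = 1/4 by norm_num]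
    linarith
  · intro a
    simp only [Fintype.sum_bool]
    ring_nf
    linarith
  · rcases eq_or_lt_of_le hα with h0 | h0
    · have hε0 : ε = 0 := le_antisymm (by linarith) hε
      simp only [Fintype.sum_bool, ← h0, hε0]
      norm_num
    · have hne : α ≠ 0 := ne_of_gt h0
      have hd1 : α/2 + ε/4 > 0 := by linarith
      have hd2 : α/2 - ε/4 > 0 := by linarith
      refine le_trans ?_ (le_abs_self _)
      simp only [Fintype.sum_bool]
      have hd1' : (α/2 + ε/4)/2 ≠ 0 := by positivity
      have hd2' : (α/2 - ε/4)/2 ≠ 0 := by positivity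
      have hsum : (α/2 - ε/4)/2 + (α/2 + ε/4)/2 ≠ 0 := by
        rw [show (α/2 - ε/4)/2 + (α/2 + ε/4)/2 = α/2 from by ring]; positivity
      rw [div_le_iff₀ (by positivity)]
      field_simp
      ring_nf
      have : 0 ≤ ε * α ^ 2 := by positivity
      have : 0 ≤ ε ^ 2 * α := by positivity
      linarith
end

section
/- Adjustment soundness via screening sets: Let S, S' be subsets of V \ (X ∪ Y). If Y ⊥ (S \ S') | (X ∪ S') and X ⊥ (S' \ S) | S both hold exactly in P (i.e., the corresponding Δ quantities are zero), then T_{S'} = T_S, where T_B := Σ_b P(y | b, x)·P(b). -/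
/-- Adjustment soundness via screening sets. The alphabets are
modeled as `C = S ∩ S'`, `D = S \ S'`, `E = S' \ S`. If `Y ⊥ D | (X, C, E)` and
`X ⊥ E | (C, D)` hold exactly, then `T_{S'} = T_S`. -/
theorem screening_set_soundness
    {C D E X Y : Type*} [Fintype C] [Fintype D] [Fintype E] [Fintype X] [Fintype Y]
    (p : C → D → E → X → Y → ℝ) (x : X) (y : Y)
    (hp : ∀ c d e x' y', 0 ≤ p c d e x' y')
    (hsum : ∑ c, ∑ d, ∑ e, ∑ x', ∑ y', p c d e x' y' = 1)
    (hpos : ∀ c d e x', 0 < ∑ y', p c d e x' y')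
    -- Y ⊥ (S \ S') | (X ∪ S'):  P(y', d | x', c, e) = P(y'|x',c,e)·P(d|x',c,e)
    (hCI1 : ∀ c d e x' y',
      p c d e x' y' / (∑ d', ∑ y'', p c d' e x' y'') =
      ((∑ d', p c d' e x' y') / (∑ d', ∑ y'', p c d' e x' y'')) *
      ((∑ y'', p c d e x' y'') / (∑ d', ∑ y'', p c d' e x' y'')))
    -- X ⊥ (S' \ S) | S:  P(x', e | c, d) = P(x'|c,d)·P(e|c,d)
    (hCI2 : ∀ c d e x',
      (∑ y', p c d e x' y') / (∑ e', ∑ x'', ∑ y', p c d e' x'' y') =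
      ((∑ e', ∑ y', p c d e' x' y') / (∑ e', ∑ x'', ∑ y', p c d e' x'' y')) *
      ((∑ x'', ∑ y', p c d e x'' y') / (∑ e', ∑ x'', ∑ y', p c d e' x'' y'))) :
    (∑ c, ∑ e, ((∑ d, p c d e x y) / (∑ d, ∑ y', p c d e x y')) *
        (∑ d, ∑ x', ∑ y', p c d e x' y')) =
    ∑ c, ∑ d, ((∑ e, p c d e x y) / (∑ e, ∑ y', p c d e x y')) *
        (∑ e, ∑ x', ∑ y', p c d e x' y') := by
  -- nonemptiness of index types
  have hDne : (Finset.univ : Finset D).Nonempty := by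
    by_contra h
    rw [Finset.not_nonempty_iff_eq_empty] at h
    simp [h] at hsum
  have hEne : (Finset.univ : Finset E).Nonempty := by
    by_contra h
    rw [Finset.not_nonempty_iff_eq_empty] at h
    simp [h] at hsum
  have hXne : (Finset.univ : Finset X).Nonempty := by
    by_contra h
    rw [Finset.not_nonempty_iff_eq_empty] at h
    simp [h] at hsum
  -- positivity facts
  have hM : ∀ c e x', 0 < ∑ d, ∑ y', p c d e x' y' :=
    fun c e x' => Finset.sum_pos (fun d _ => hpos c d e x') hDne
  have hK : ∀ c d, 0 < ∑ e, ∑ x', ∑ y', p c d e x' y' :=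
    fun c d => Finset.sum_pos (fun e _ => Finset.sum_pos (fun x' _ => hpos c d e x') hXne) hEne
  have hR : ∀ c d x', 0 < ∑ e, ∑ y', p c d e x' y' :=
    fun c d x' => Finset.sum_pos (fun e _ => hpos c d e x') hEne
  -- product forms of the CI hypotheses
  have key1 : ∀ c d e,
      p c d e x y * (∑ d', ∑ y'', p c d' e x y'') =
      (∑ d', p c d' e x y) * (∑ y'', p c d e x y'') := by
    intro c d e
    have h := hCI1 c d e x y
    have hMne := (hM c e x).ne'
    field_simp at h
    apply mul_right_cancel₀ hMne
    linear_combination (∑ d', ∑ y'', p c d' e x y'') * h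
  have key2 : ∀ c d e x',
      (∑ y', p c d e x' y') * (∑ e', ∑ x'', ∑ y', p c d e' x'' y') =
      (∑ e', ∑ y', p c d e' x' y') * (∑ x'', ∑ y', p c d e x'' y') := by
    intro c d e x'
    have h := hCI2 c d e x'
    have hKne := (hK c d).ne'
    field_simp at h
    apply mul_right_cancel₀ hKne
    linear_combination (∑ e', ∑ x'', ∑ y', p c d e' x'' y') * h
  -- middle quantity
  trans ∑ c, ∑ d, ∑ e, (p c d e x y / (∑ y', p c d e x y')) *
      (∑ x', ∑ y', p c d e x' y')
  · -- LHS = mid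
    rw [Finset.sum_congr rfl (fun c _ => Finset.sum_comm (s := Finset.univ)
      (t := Finset.univ) (f := fun d e => (p c d e x y / (∑ y', p c d e x y')) *
      (∑ x', ∑ y', p c d e x' y')))]
    refine Finset.sum_congr rfl (fun c _ => Finset.sum_congr rfl (fun e _ => ?_))
    have hterm : ∀ d, p c d e x y / (∑ y', p c d e x y') =
        (∑ d', p c d' e x y) / (∑ d', ∑ y', p c d' e x y') := by
      intro d
      rw [div_eq_div_iff (hpos c d e x).ne' (hM c e x).ne']
      have := key1 c d e
      linarith
    calc ((∑ d, p c d e x y) / (∑ d, ∑ y', p c d e x y')) *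
          (∑ d, ∑ x', ∑ y', p c d e x' y')
        = ∑ d, ((∑ d', p c d' e x y) / (∑ d', ∑ y', p c d' e x y')) *
          (∑ x', ∑ y', p c d e x' y') := by rw [← Finset.mul_sum]
      _ = ∑ d, (p c d e x y / (∑ y', p c d e x y')) *
          (∑ x', ∑ y', p c d e x' y') := by
          exact Finset.sum_congr rfl (fun d _ => by rw [hterm d])
  · -- mid = RHS
    refine Finset.sum_congr rfl (fun c _ => Finset.sum_congr rfl (fun d _ => ?_))
    have hterm : ∀ e, (∑ x', ∑ y', p c d e x' y') / (∑ y', p c d e x y') =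
        (∑ e', ∑ x', ∑ y', p c d e' x' y') / (∑ e', ∑ y', p c d e' x y') := by
      intro e
      rw [div_eq_div_iff (hpos c d e x).ne' (hR c d x).ne']
      have := key2 c d e x
      linarith
    calc ∑ e, (p c d e x y / (∑ y', p c d e x y')) * (∑ x', ∑ y', p c d e x' y')
        = ∑ e, p c d e x y * ((∑ x', ∑ y', p c d e x' y') / (∑ y', p c d e x y')) := by
          exact Finset.sum_congr rfl (fun e _ => by ring)
      _ = ∑ e, p c d e x y * ((∑ e', ∑ x', ∑ y', p c d e' x' y') /
            (∑ e', ∑ y', p c d e' x y')) := by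
          exact Finset.sum_congr rfl (fun e _ => by rw [hterm e])
      _ = ((∑ e, p c d e x y) / (∑ e, ∑ y', p c d e x y')) *
            (∑ e, ∑ x', ∑ y', p c d e x' y') := by
          rw [← Finset.sum_mul]; ring
end

section
/- If S ⊆ A ⊆ V \ (X ∪ Y) is an exact Markov blanket of X with respect to A, i.e. X ⊥ (A \ S) | S holds in P, then T_S = T_A, where T_B := Σ_b P(y | b, x)·P(b). -/
/-- Exact Markov blanket adjustment. If `S` is an exact Markov
blanket of `X` with respect to `A = S ∪ R` (i.e. `X ⊥ R | S` holds exactly),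
then `T_S = T_A`. -/
theorem markov_blanket_adjustment
    {S R X Y : Type*} [Fintype S] [Fintype R] [Fintype X] [Fintype Y]
    (p : S → R → X → Y → ℝ) (x : X) (y : Y)
    (hp : ∀ s r x' y', 0 ≤ p s r x' y')
    (hsum : ∑ s, ∑ r, ∑ x', ∑ y', p s r x' y' = 1)
    (hpos : ∀ s r x', 0 < ∑ y', p s r x' y')
    -- X ⊥ (A \ S) | S:  P(x', r | s) = P(x'|s)·P(r|s)
    (hCI : ∀ s r x',
      (∑ y', p s r x' y') / (∑ r', ∑ x'', ∑ y', p s r' x'' y') =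
      ((∑ r', ∑ y', p s r' x' y') / (∑ r', ∑ x'', ∑ y', p s r' x'' y')) *
      ((∑ x'', ∑ y', p s r x'' y') / (∑ r', ∑ x'', ∑ y', p s r' x'' y'))) :
    (∑ s, ((∑ r, p s r x y) / (∑ r, ∑ y', p s r x y')) *
        (∑ r, ∑ x', ∑ y', p s r x' y')) =
    ∑ s, ∑ r, (p s r x y / (∑ y', p s r x y')) *
        (∑ x', ∑ y', p s r x' y') := by
  have hR : Nonempty R := by
    by_contra h
    rw [not_nonempty_iff] at h
    simp at hsum
  refine Finset.sum_congr rfl fun s _ => ?_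
  have hMpos : ∀ r, 0 < ∑ x', ∑ y', p s r x' y' := by
    intro r
    refine Finset.sum_pos' (fun x' _ => Finset.sum_nonneg fun y' _ => hp s r x' y')
      ⟨x, Finset.mem_univ x, hpos s r x⟩
  have hPs : 0 < ∑ r, ∑ x', ∑ y', p s r x' y' :=
    Finset.sum_pos' (fun r _ => (hMpos r).le)
      ⟨Classical.arbitrary R, Finset.mem_univ _, hMpos _⟩
  have hB : 0 < ∑ r, ∑ y', p s r x y' :=
    Finset.sum_pos' (fun r _ => (hpos s r x).le)
      ⟨Classical.arbitrary R, Finset.mem_univ _, hpos s _ x⟩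
  have key : ∀ r, (p s r x y / (∑ y', p s r x y')) * (∑ x', ∑ y', p s r x' y')
      = p s r x y * (∑ r', ∑ x', ∑ y', p s r' x' y') / (∑ r', ∑ y', p s r' x y') := by
    intro r
    have hN : 0 < ∑ y', p s r x y' := hpos s r x
    have hC := hCI s r x
    have hM : (∑ x', ∑ y', p s r x' y') =
        (∑ y', p s r x y') * (∑ r', ∑ x', ∑ y', p s r' x' y') / (∑ r', ∑ y', p s r' x y') := by
      field_simp at hC ⊢
      nlinarith [hC]
    rw [hM]
    field_simp
  rw [Finset.sum_congr rfl fun r _ => key r, ← Finset.sum_div, ← Finset.sum_mul,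
    div_mul_eq_mul_div]
end

section
/- First triangle bound in the BAMBA analysis: Define Z := Σ_{u} (1/P(x | s(u)))·P(x, u)·P(y | x, s'(u)), where u ranges over the alphabet of S ∪ S' and s(u), s'(u) denote the restrictions of u to S and S'. If Δ_{Y ⊥ (S\S') | X ∪ S'} := Σ over all values of y', x', u of P(x', s'(u))·|P(y' | x', s'(u))·P(s(u)\s'(u) | x', s'(u)) − P(y', s(u)\s'(u) | x', s'(u))| ≤ ε, and α_S := min_s P(x | s) > 0, then |T_{S∪S'} computed with weights P(x,u)/P(x|s(u)) minus Z|, namely |Σ_u (P(x,u)/P(x|s(u)))·(P(y | x, u) − P(y | x, s'(u)))|, is at most ε/α_S. -/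
set_option maxHeartbeats 1600000


/-- First triangle bound in the BAMBA analysis. With
`C = S ∩ S'`, `D = S \ S'`, `E = S' \ S`, `u = (c,d,e)`, `s(u) = (c,d)`,
`s'(u) = (c,e)`: if `Δ_{Y ⊥ D | (X,C,E)} ≤ ε` and `α_S = min_s P(x|s) > 0`,
then `|∑_u (P(x,u)/P(x|s(u)))·(P(y|x,u) − P(y|x,s'(u)))| ≤ ε/α_S`. -/
theorem bamba_first_triangle_bound
    {C D E X Y : Type*} [Fintype C] [Fintype D] [Fintype E] [Fintype X] [Fintype Y]
    [Nonempty C] [Nonempty D]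
    (p : C → D → E → X → Y → ℝ) (x : X) (y : Y) (ε : ℝ)
    (hp : ∀ c d e x' y', 0 ≤ p c d e x' y')
    (hsum : ∑ c, ∑ d, ∑ e, ∑ x', ∑ y', p c d e x' y' = 1)
    (hpos : ∀ c d e x', 0 < ∑ y', p c d e x' y')
    (hΔ : (∑ y' : Y, ∑ x' : X, ∑ c, ∑ d, ∑ e,
        (∑ d', ∑ y'', p c d' e x' y'') *
          |((∑ d', p c d' e x' y') / (∑ d', ∑ y'', p c d' e x' y'')) *
              ((∑ y'', p c d e x' y'') / (∑ d', ∑ y'', p c d' e x' y'')) -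
            p c d e x' y' / (∑ d', ∑ y'', p c d' e x' y'')|) ≤ ε)
    (hα : 0 < Finset.univ.inf' Finset.univ_nonempty
        (fun s : C × D => (∑ e, ∑ y', p s.1 s.2 e x y') /
          (∑ e, ∑ x', ∑ y', p s.1 s.2 e x' y'))) :
    |∑ c, ∑ d, ∑ e,
        ((∑ y', p c d e x y') /
            ((∑ e', ∑ y', p c d e' x y') / (∑ e', ∑ x', ∑ y', p c d e' x' y'))) *
          (p c d e x y / (∑ y', p c d e x y') -
            (∑ d', p c d' e x y) / (∑ d', ∑ y', p c d' e x y'))| ≤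
      ε / Finset.univ.inf' Finset.univ_nonempty
        (fun s : C × D => (∑ e, ∑ y', p s.1 s.2 e x y') /
          (∑ e, ∑ x', ∑ y', p s.1 s.2 e x' y')) := by
  have hE : Nonempty E := by
    rcases isEmpty_or_nonempty E with h | h
    · simp [Finset.univ_eq_empty] at hsum
    · exact h
  set α := Finset.univ.inf' Finset.univ_nonempty
        (fun s : C × D => (∑ e, ∑ y', p s.1 s.2 e x y') /
          (∑ e, ∑ x', ∑ y', p s.1 s.2 e x' y')) with hαdef
  -- positivity facts
  have hA : ∀ c d, 0 < ∑ e, ∑ y', p c d e x y' := fun c d =>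
    Finset.sum_pos (fun e _ => hpos c d e x) Finset.univ_nonempty
  have hB : ∀ c d, 0 < ∑ e, ∑ x', ∑ y', p c d e x' y' := fun c d =>
    Finset.sum_pos (fun e _ =>
      Finset.sum_pos' (fun x' _ => Finset.sum_nonneg fun y' _ => hp c d e x' y')
        ⟨x, Finset.mem_univ x, (hpos c d e x)⟩) Finset.univ_nonempty
  have hN : ∀ c e, 0 < ∑ d', ∑ y', p c d' e x y' := fun c e =>
    Finset.sum_pos (fun d' _ => hpos c d' e x) Finset.univ_nonempty
  have hαle : ∀ c d, α ≤ (∑ e, ∑ y', p c d e x y') / (∑ e, ∑ x', ∑ y', p c d e x' y') :=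
    fun c d => Finset.inf'_le _ (Finset.mem_univ ((c, d) : C × D))
  -- pointwise bound
  have hpt : ∀ c d e,
      |((∑ y', p c d e x y') /
            ((∑ e', ∑ y', p c d e' x y') / (∑ e', ∑ x', ∑ y', p c d e' x' y'))) *
          (p c d e x y / (∑ y', p c d e x y') -
            (∑ d', p c d' e x y) / (∑ d', ∑ y', p c d' e x y'))|
      ≤ α⁻¹ * ((∑ d', ∑ y'', p c d' e x y'') *
          |((∑ d', p c d' e x y) / (∑ d', ∑ y'', p c d' e x y'')) *
              ((∑ y'', p c d e x y'') / (∑ d', ∑ y'', p c d' e x y'')) -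
            p c d e x y / (∑ d', ∑ y'', p c d' e x y'')|) := by
    intro c d e
    set A := ∑ e', ∑ y', p c d e' x y' with hAdef
    set B := ∑ e', ∑ x', ∑ y', p c d e' x' y' with hBdef
    set N := ∑ d', ∑ y'', p c d' e x y'' with hNdef
    set Py := ∑ y', p c d e x y' with hPydef
    set Dv := ∑ d', p c d' e x y with hDvdef
    have hA' : 0 < A := hA c d
    have hB' : 0 < B := hB c d
    have hN' : 0 < N := hN c e
    have hPy' : 0 < Py := hpos c d e x
    have e1 : Py / (A / B) * (p c d e x y / Py - Dv / N)
        = (B / A) * (p c d e x y - Dv * Py / N) := by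
      field_simp
    have e2 : N * |Dv / N * (Py / N) - p c d e x y / N|
        = |Dv * Py / N - p c d e x y| := by
      rw [show Dv / N * (Py / N) - p c d e x y / N
            = (Dv * Py / N - p c d e x y) / N by field_simp,
          abs_div, abs_of_pos hN']
      field_simp
    have hBA : B / A ≤ α⁻¹ := by
      have h1 : α * B ≤ A := (le_div_iff₀ hB').mp (hαle c d)
      rw [div_le_iff₀ hA', inv_mul_eq_div, le_div_iff₀ hα, mul_comm]
      exact h1
    rw [e1, e2, abs_mul, abs_of_pos (div_pos hB' hA'), abs_sub_comm]
    exact mul_le_mul_of_nonneg_right hBA (abs_nonneg _)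
  -- triangle inequality on the triple sum
  have habs : |∑ c, ∑ d, ∑ e,
        ((∑ y', p c d e x y') /
            ((∑ e', ∑ y', p c d e' x y') / (∑ e', ∑ x', ∑ y', p c d e' x' y'))) *
          (p c d e x y / (∑ y', p c d e x y') -
            (∑ d', p c d' e x y) / (∑ d', ∑ y', p c d' e x y'))|
      ≤ ∑ c, ∑ d, ∑ e, |((∑ y', p c d e x y') /
            ((∑ e', ∑ y', p c d e' x y') / (∑ e', ∑ x', ∑ y', p c d e' x' y'))) *
          (p c d e x y / (∑ y', p c d e x y') -
            (∑ d', p c d' e x y) / (∑ d', ∑ y', p c d' e x y'))| := by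
    refine (Finset.abs_sum_le_sum_abs _ _).trans (Finset.sum_le_sum fun c _ => ?_)
    refine (Finset.abs_sum_le_sum_abs _ _).trans (Finset.sum_le_sum fun d _ => ?_)
    exact Finset.abs_sum_le_sum_abs _ _
  -- domination of the triple sum by the full Δ sum
  have hΔ' : (∑ c, ∑ d, ∑ e, ((∑ d', ∑ y'', p c d' e x y'') *
          |((∑ d', p c d' e x y) / (∑ d', ∑ y'', p c d' e x y'')) *
              ((∑ y'', p c d e x y'') / (∑ d', ∑ y'', p c d' e x y'')) -
            p c d e x y / (∑ d', ∑ y'', p c d' e x y'')|)) ≤ ε := by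
    refine le_trans ?_ hΔ
    have step1 : (∑ c, ∑ d, ∑ e, ((∑ d', ∑ y'', p c d' e x y'') *
          |((∑ d', p c d' e x y) / (∑ d', ∑ y'', p c d' e x y'')) *
              ((∑ y'', p c d e x y'') / (∑ d', ∑ y'', p c d' e x y'')) -
            p c d e x y / (∑ d', ∑ y'', p c d' e x y'')|))
        ≤ ∑ x' : X, ∑ c, ∑ d, ∑ e, ((∑ d', ∑ y'', p c d' e x' y'') *
          |((∑ d', p c d' e x' y) / (∑ d', ∑ y'', p c d' e x' y'')) *
              ((∑ y'', p c d e x' y'') / (∑ d', ∑ y'', p c d' e x' y'')) -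
            p c d e x' y / (∑ d', ∑ y'', p c d' e x' y'')|) := by
      refine Finset.single_le_sum (f := fun x' => ∑ c, ∑ d, ∑ e,
        ((∑ d', ∑ y'', p c d' e x' y'') *
          |((∑ d', p c d' e x' y) / (∑ d', ∑ y'', p c d' e x' y'')) *
              ((∑ y'', p c d e x' y'') / (∑ d', ∑ y'', p c d' e x' y'')) -
            p c d e x' y / (∑ d', ∑ y'', p c d' e x' y'')|))
        (fun x' _ => Finset.sum_nonneg fun c _ => Finset.sum_nonneg fun d _ =>
          Finset.sum_nonneg fun e _ => mul_nonneg
            (Finset.sum_nonneg fun d' _ => Finset.sum_nonneg fun y'' _ => hp c d' e x' y'')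
            (abs_nonneg _)) (Finset.mem_univ x)
    refine step1.trans ?_
    refine Finset.single_le_sum (f := fun y' => ∑ x' : X, ∑ c, ∑ d, ∑ e,
        ((∑ d', ∑ y'', p c d' e x' y'') *
          |((∑ d', p c d' e x' y') / (∑ d', ∑ y'', p c d' e x' y'')) *
              ((∑ y'', p c d e x' y'') / (∑ d', ∑ y'', p c d' e x' y'')) -
            p c d e x' y' / (∑ d', ∑ y'', p c d' e x' y'')|))
      (fun y' _ => Finset.sum_nonneg fun x' _ => Finset.sum_nonneg fun c _ =>
        Finset.sum_nonneg fun d _ => Finset.sum_nonneg fun e _ => mul_nonneg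
          (Finset.sum_nonneg fun d' _ => Finset.sum_nonneg fun y'' _ => hp c d' e x' y'')
          (abs_nonneg _)) (Finset.mem_univ y)
  refine habs.trans ?_
  calc ∑ c, ∑ d, ∑ e, |((∑ y', p c d e x y') /
            ((∑ e', ∑ y', p c d e' x y') / (∑ e', ∑ x', ∑ y', p c d e' x' y'))) *
          (p c d e x y / (∑ y', p c d e x y') -
            (∑ d', p c d' e x y) / (∑ d', ∑ y', p c d' e x y'))|
      ≤ ∑ c, ∑ d, ∑ e, α⁻¹ * ((∑ d', ∑ y'', p c d' e x y'') *
          |((∑ d', p c d' e x y) / (∑ d', ∑ y'', p c d' e x y'')) *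
              ((∑ y'', p c d e x y'') / (∑ d', ∑ y'', p c d' e x y'')) -
            p c d e x y / (∑ d', ∑ y'', p c d' e x y'')|) := by
        refine Finset.sum_le_sum fun c _ => Finset.sum_le_sum fun d _ =>
          Finset.sum_le_sum fun e _ => hpt c d e
    _ = α⁻¹ * ∑ c, ∑ d, ∑ e, ((∑ d', ∑ y'', p c d' e x y'') *
          |((∑ d', p c d' e x y) / (∑ d', ∑ y'', p c d' e x y'')) *
              ((∑ y'', p c d e x y'') / (∑ d', ∑ y'', p c d' e x y'')) -
            p c d e x y / (∑ d', ∑ y'', p c d' e x y'')|) := by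
        simp_rw [Finset.mul_sum]
    _ ≤ α⁻¹ * ε := mul_le_mul_of_nonneg_left hΔ' (inv_nonneg.mpr hα.le)
    _ = ε / α := by rw [inv_mul_eq_div]
end

section
/- Second triangle bound in the BAMBA analysis: With Z defined as Z := Σ_u (1/P(x | s(u)))·P(x, u)·P(y | x, s'(u)) (u ranging over the alphabet of S ∪ S'), if Δ_{X ⊥ (S'\S) | S} := Σ over all values x', u of P(s(u))·|P(x' | s(u))·P(s'(u)\s(u) | s(u)) − P(x', s'(u)\s(u) | s(u))| ≤ ε and α_S := min_s P(x | s) > 0, then |T_{S'} − Z| ≤ ε/α_S, where T_{S'} := Σ_{s'} P(y | x, s')·P(s'). -/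
/-- Abstract version of the second triangle bound. -/
lemma bamba_aux {C D E : Type*} [Fintype C] [Fintype D] [Fintype E]
    (r : C → E → ℝ) (Pcde Pxe : C → D → E → ℝ) (Px Pcd : C → D → ℝ)
    (α ε : ℝ) (hα : 0 < α)
    (hr0 : ∀ c e, 0 ≤ r c e) (hr1 : ∀ c e, r c e ≤ 1)
    (hPx : ∀ c d, α ≤ Px c d)
    (hPcd : ∀ c d, 0 < Pcd c d)
    (hΔ : ∑ c, ∑ d, ∑ e, Pcd c d *
        |Px c d * (Pcde c d e / Pcd c d) - Pxe c d e / Pcd c d| ≤ ε) :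
    |(∑ c, ∑ e, r c e * ∑ d, Pcde c d e) -
      ∑ c, ∑ d, ∑ e, (1 / Px c d) * Pxe c d e * r c e| ≤ ε / α := by
  have hPx0 : ∀ c d, 0 < Px c d := fun c d => lt_of_lt_of_le hα (hPx c d)
  have hT : (∑ c, ∑ e, r c e * ∑ d, Pcde c d e)
      = ∑ c, ∑ d, ∑ e, r c e * Pcde c d e := by
    refine Finset.sum_congr rfl fun c _ => ?_
    rw [Finset.sum_comm]
    exact Finset.sum_congr rfl fun e _ => Finset.mul_sum _ _ _
  rw [hT, ← Finset.sum_sub_distrib]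
  have key : ∀ (c : C) (d : D) (e : E),
      |r c e * Pcde c d e - (1 / Px c d) * Pxe c d e * r c e|
      ≤ (1 / α) * (Pcd c d *
        |Px c d * (Pcde c d e / Pcd c d) - Pxe c d e / Pcd c d|) := by
    intro c d e
    have h1 : Pcd c d ≠ 0 := (hPcd c d).ne'
    have h2 : Px c d ≠ 0 := (hPx0 c d).ne'
    have hrhs : Pcd c d * |Px c d * (Pcde c d e / Pcd c d) - Pxe c d e / Pcd c d|
        = |Px c d * Pcde c d e - Pxe c d e| := by
      have h4 : Pcd c d * (Px c d * (Pcde c d e / Pcd c d) - Pxe c d e / Pcd c d)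
          = Px c d * Pcde c d e - Pxe c d e := by
        field_simp
      rw [← h4, abs_mul, abs_of_pos (hPcd c d)]
    have hlhs : r c e * Pcde c d e - (1 / Px c d) * Pxe c d e * r c e
        = r c e * (1 / Px c d) * (Px c d * Pcde c d e - Pxe c d e) := by
      field_simp
    rw [hrhs, hlhs, abs_mul, abs_mul, abs_of_nonneg (hr0 c e),
      abs_of_nonneg (le_of_lt (one_div_pos.mpr (hPx0 c d)))]
    have h3 : 1 / Px c d ≤ 1 / α := one_div_le_one_div_of_le hα (hPx c d)
    calc r c e * (1 / Px c d) * |Px c d * Pcde c d e - Pxe c d e|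
        ≤ 1 * (1 / α) * |Px c d * Pcde c d e - Pxe c d e| := by
          apply mul_le_mul_of_nonneg_right _ (abs_nonneg _)
          exact mul_le_mul (hr1 c e) h3 (le_of_lt (one_div_pos.mpr (hPx0 c d)))
            zero_le_one
      _ = (1 / α) * |Px c d * Pcde c d e - Pxe c d e| := by ring
  have habs : |∑ c, ((∑ d, ∑ e, r c e * Pcde c d e) -
      ∑ d, ∑ e, (1 / Px c d) * Pxe c d e * r c e)|
      ≤ ∑ c, ∑ d, ∑ e, |r c e * Pcde c d e - (1 / Px c d) * Pxe c d e * r c e| := by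
    refine (Finset.abs_sum_le_sum_abs _ _).trans (Finset.sum_le_sum fun c _ => ?_)
    rw [← Finset.sum_sub_distrib]
    refine (Finset.abs_sum_le_sum_abs _ _).trans (Finset.sum_le_sum fun d _ => ?_)
    rw [← Finset.sum_sub_distrib]
    exact Finset.abs_sum_le_sum_abs _ _
  calc |∑ c, ((∑ d, ∑ e, r c e * Pcde c d e) -
        ∑ d, ∑ e, (1 / Px c d) * Pxe c d e * r c e)|
      ≤ ∑ c, ∑ d, ∑ e, |r c e * Pcde c d e - (1 / Px c d) * Pxe c d e * r c e| :=
        habs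
    _ ≤ ∑ c, ∑ d, ∑ e, (1 / α) * (Pcd c d *
        |Px c d * (Pcde c d e / Pcd c d) - Pxe c d e / Pcd c d|) :=
        Finset.sum_le_sum fun c _ => Finset.sum_le_sum fun d _ =>
          Finset.sum_le_sum fun e _ => key c d e
    _ = (1 / α) * ∑ c, ∑ d, ∑ e, Pcd c d *
        |Px c d * (Pcde c d e / Pcd c d) - Pxe c d e / Pcd c d| := by
        simp_rw [Finset.mul_sum]
    _ ≤ (1 / α) * ε :=
        mul_le_mul_of_nonneg_left hΔ (le_of_lt (one_div_pos.mpr hα))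
    _ = ε / α := by rw [one_div, inv_mul_eq_div]

/-- Second triangle bound in the BAMBA analysis. With
`C = S ∩ S'`, `D = S \ S'`, `E = S' \ S` and
`Z = ∑_u (1/P(x|s(u)))·P(x,u)·P(y|x,s'(u))`: if `Δ_{X ⊥ E | (C,D)} ≤ ε` and
`α_S = min_s P(x|s) > 0`, then `|T_{S'} − Z| ≤ ε/α_S`. -/
theorem bamba_second_triangle_bound
    {C D E X Y : Type*} [Fintype C] [Fintype D] [Fintype E] [Fintype X] [Fintype Y]
    [Nonempty C] [Nonempty D]
    (p : C → D → E → X → Y → ℝ) (x : X) (y : Y) (ε : ℝ)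
    (hp : ∀ c d e x' y', 0 ≤ p c d e x' y')
    (hsum : ∑ c, ∑ d, ∑ e, ∑ x', ∑ y', p c d e x' y' = 1)
    (hpos : ∀ c d e x', 0 < ∑ y', p c d e x' y')
    (hΔ : (∑ x' : X, ∑ c, ∑ d, ∑ e,
        (∑ e', ∑ x'', ∑ y', p c d e' x'' y') *
          |((∑ e', ∑ y', p c d e' x' y') / (∑ e', ∑ x'', ∑ y', p c d e' x'' y')) *
              ((∑ x'', ∑ y', p c d e x'' y') / (∑ e', ∑ x'', ∑ y', p c d e' x'' y')) -
            (∑ y', p c d e x' y') / (∑ e', ∑ x'', ∑ y', p c d e' x'' y')|) ≤ ε)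
    (hα : 0 < Finset.univ.inf' Finset.univ_nonempty
        (fun s : C × D => (∑ e, ∑ y', p s.1 s.2 e x y') /
          (∑ e, ∑ x', ∑ y', p s.1 s.2 e x' y'))) :
    |(∑ c, ∑ e, ((∑ d, p c d e x y) / (∑ d, ∑ y', p c d e x y')) *
          (∑ d, ∑ x', ∑ y', p c d e x' y')) -
      (∑ c, ∑ d, ∑ e,
        (1 / ((∑ e', ∑ y', p c d e' x y') / (∑ e', ∑ x', ∑ y', p c d e' x' y'))) *
          (∑ y', p c d e x y') *
          ((∑ d', p c d' e x y) / (∑ d', ∑ y', p c d' e x y')))| ≤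
      ε / Finset.univ.inf' Finset.univ_nonempty
        (fun s : C × D => (∑ e, ∑ y', p s.1 s.2 e x y') /
          (∑ e, ∑ x', ∑ y', p s.1 s.2 e x' y')) := by
  have hX : Nonempty X := ⟨x⟩
  have hE : Nonempty E := by
    by_contra h
    rw [not_nonempty_iff] at h
    simp at hsum
  have hPcd : ∀ c d, 0 < ∑ e', ∑ x', ∑ y', p c d e' x' y' := fun c d =>
    Finset.sum_pos (fun e _ => Finset.sum_pos (fun x' _ => hpos c d e x')
      Finset.univ_nonempty) Finset.univ_nonempty
  have hr0 : ∀ (c : C) (e : E),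
      0 ≤ (∑ d, p c d e x y) / (∑ d, ∑ y', p c d e x y') := fun c e =>
    div_nonneg (Finset.sum_nonneg fun d _ => hp c d e x y)
      (Finset.sum_nonneg fun d _ => (hpos c d e x).le)
  have hr1 : ∀ (c : C) (e : E),
      (∑ d, p c d e x y) / (∑ d, ∑ y', p c d e x y') ≤ 1 := by
    intro c e
    rw [div_le_one (Finset.sum_pos (fun d _ => hpos c d e x) Finset.univ_nonempty)]
    exact Finset.sum_le_sum fun d _ =>
      Finset.single_le_sum (fun y' _ => hp c d e x y') (Finset.mem_univ y)
  have hPx : ∀ (c : C) (d : D),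
      Finset.univ.inf' Finset.univ_nonempty
        (fun s : C × D => (∑ e, ∑ y', p s.1 s.2 e x y') /
          (∑ e, ∑ x', ∑ y', p s.1 s.2 e x' y'))
      ≤ (∑ e', ∑ y', p c d e' x y') / (∑ e', ∑ x', ∑ y', p c d e' x' y') :=
    fun c d => Finset.inf'_le _ (Finset.mem_univ (c, d))
  have hΔ' : ∑ c, ∑ d, ∑ e, (∑ e', ∑ x', ∑ y', p c d e' x' y') *
      |((∑ e', ∑ y', p c d e' x y') / (∑ e', ∑ x', ∑ y', p c d e' x' y')) *
          ((∑ x', ∑ y', p c d e x' y') / (∑ e', ∑ x', ∑ y', p c d e' x' y')) -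
        (∑ y', p c d e x y') / (∑ e', ∑ x', ∑ y', p c d e' x' y')| ≤ ε := by
    refine le_trans ?_ hΔ
    refine Finset.single_le_sum (f := fun x' => ∑ c, ∑ d, ∑ e,
        (∑ e', ∑ x'', ∑ y', p c d e' x'' y') *
          |((∑ e', ∑ y', p c d e' x' y') / (∑ e', ∑ x'', ∑ y', p c d e' x'' y')) *
              ((∑ x'', ∑ y', p c d e x'' y') / (∑ e', ∑ x'', ∑ y', p c d e' x'' y')) -
            (∑ y', p c d e x' y') / (∑ e', ∑ x'', ∑ y', p c d e' x'' y')|)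
      (fun i _ => ?_) (Finset.mem_univ x)
    exact Finset.sum_nonneg fun c _ => Finset.sum_nonneg fun d _ =>
      Finset.sum_nonneg fun e _ => mul_nonneg (hPcd c d).le (abs_nonneg _)
  exact bamba_aux
    (fun c e => (∑ d, p c d e x y) / (∑ d, ∑ y', p c d e x y'))
    (fun c d e => ∑ x', ∑ y', p c d e x' y')
    (fun c d e => ∑ y', p c d e x y')
    (fun c d => (∑ e', ∑ y', p c d e' x y') / (∑ e', ∑ x', ∑ y', p c d e' x' y'))
    (fun c d => ∑ e', ∑ x', ∑ y', p c d e' x' y')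
    _ ε hα hr0 hr1 hPx hPcd hΔ'
end

section
/- Combining the two BAMBA bounds: Under the hypotheses of the two preceding lemmas (Δ_{Y ⊥ (S\S') | X ∪ S'} ≤ ε and Δ_{X ⊥ (S'\S) | S} ≤ ε, with α_S := min_s P(x|s) > 0), the adjustment functionals satisfy |T_S − T_{S'}| ≤ 2ε/α_S, where T_B := Σ_b P(y | b, x)·P(b). -/
private lemma bamba_slice_abs (w a b q : ℝ) (hw : 0 < w) :
    w * |a / w * (b / w) - q / w| = |b * (a / w) - q| := by
  rw [show a / w * (b / w) - q / w = (b * (a / w) - q) / w by field_simp,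
    abs_div, abs_of_pos hw, mul_comm, div_mul_cancel₀ _ hw.ne']

/-- Combining the two BAMBA bounds. With `C = S ∩ S'`,
`D = S \ S'`, `E = S' \ S`: if `Δ_{Y ⊥ D | (X,C,E)} ≤ ε` and
`Δ_{X ⊥ E | (C,D)} ≤ ε`, and `α_S = min_s P(x|s) > 0`, then
`|T_S − T_{S'}| ≤ 2ε/α_S`. -/
theorem bamba_combined_bound
    {C D E X Y : Type*} [Fintype C] [Fintype D] [Fintype E] [Fintype X] [Fintype Y]
    [Nonempty C] [Nonempty D]
    (p : C → D → E → X → Y → ℝ) (x : X) (y : Y) (ε : ℝ)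
    (hp : ∀ c d e x' y', 0 ≤ p c d e x' y')
    (hsum : ∑ c, ∑ d, ∑ e, ∑ x', ∑ y', p c d e x' y' = 1)
    (hpos : ∀ c d e x', 0 < ∑ y', p c d e x' y')
    (hΔ1 : (∑ y' : Y, ∑ x' : X, ∑ c, ∑ d, ∑ e,
        (∑ d', ∑ y'', p c d' e x' y'') *
          |((∑ d', p c d' e x' y') / (∑ d', ∑ y'', p c d' e x' y'')) *
              ((∑ y'', p c d e x' y'') / (∑ d', ∑ y'', p c d' e x' y'')) -
            p c d e x' y' / (∑ d', ∑ y'', p c d' e x' y'')|) ≤ ε)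
    (hΔ2 : (∑ x' : X, ∑ c, ∑ d, ∑ e,
        (∑ e', ∑ x'', ∑ y', p c d e' x'' y') *
          |((∑ e', ∑ y', p c d e' x' y') / (∑ e', ∑ x'', ∑ y', p c d e' x'' y')) *
              ((∑ x'', ∑ y', p c d e x'' y') / (∑ e', ∑ x'', ∑ y', p c d e' x'' y')) -
            (∑ y', p c d e x' y') / (∑ e', ∑ x'', ∑ y', p c d e' x'' y')|) ≤ ε)
    (hα : 0 < Finset.univ.inf' Finset.univ_nonempty
        (fun s : C × D => (∑ e, ∑ y', p s.1 s.2 e x y') /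
          (∑ e, ∑ x', ∑ y', p s.1 s.2 e x' y'))) :
    |(∑ c, ∑ d, ((∑ e, p c d e x y) / (∑ e, ∑ y', p c d e x y')) *
          (∑ e, ∑ x', ∑ y', p c d e x' y')) -
      (∑ c, ∑ e, ((∑ d, p c d e x y) / (∑ d, ∑ y', p c d e x y')) *
          (∑ d, ∑ x', ∑ y', p c d e x' y'))| ≤
      2 * ε / Finset.univ.inf' Finset.univ_nonempty
        (fun s : C × D => (∑ e, ∑ y', p s.1 s.2 e x y') /
          (∑ e, ∑ x', ∑ y', p s.1 s.2 e x' y')) := by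
  classical
  haveI : Nonempty X := ⟨x⟩
  haveI : Nonempty Y := ⟨y⟩
  set α := Finset.univ.inf' Finset.univ_nonempty
      (fun s : C × D => (∑ e, ∑ y', p s.1 s.2 e x y') /
        (∑ e, ∑ x', ∑ y', p s.1 s.2 e x' y')) with hαdef
  -- E must be nonempty, otherwise α = 0
  rcases isEmpty_or_nonempty E with hE | hE
  · exfalso
    obtain ⟨c0⟩ := ‹Nonempty C›
    obtain ⟨d0⟩ := ‹Nonempty D›
    have h0 : α ≤ (∑ e : E, ∑ y', p c0 d0 e x y') /
        (∑ e : E, ∑ x', ∑ y', p c0 d0 e x' y') :=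
      Finset.inf'_le
        (fun s : C × D => (∑ e, ∑ y', p s.1 s.2 e x y') /
          (∑ e, ∑ x', ∑ y', p s.1 s.2 e x' y'))
        (Finset.mem_univ (c0, d0))
    rw [Finset.univ_eq_empty (α := E)] at h0
    simp only [Finset.sum_empty, zero_div] at h0
    linarith
  -- abbreviations
  set B : C → D → ℝ := fun c d => ∑ e, ∑ y', p c d e x y' with hB
  set M : C → D → ℝ := fun c d => ∑ e, ∑ x', ∑ y', p c d e x' y' with hM
  set W : C → E → ℝ := fun c e => ∑ d, ∑ y', p c d e x y' with hW
  set Ay : C → E → ℝ := fun c e => ∑ d, p c d e x y with hAy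
  set Pm : C → D → E → ℝ := fun c d e => ∑ x', ∑ y', p c d e x' y' with hPm
  set Bxe : C → D → E → ℝ := fun c d e => ∑ y', p c d e x y' with hBxe
  have hB_pos : ∀ c d, 0 < B c d := fun c d =>
    Finset.sum_pos (fun e _ => hpos c d e x) Finset.univ_nonempty
  have hM_pos : ∀ c d, 0 < M c d := fun c d =>
    Finset.sum_pos (fun e _ => Finset.sum_pos (fun x' _ => hpos c d e x')
      Finset.univ_nonempty) Finset.univ_nonempty
  have hW_pos : ∀ c e, 0 < W c e := fun c e =>
    Finset.sum_pos (fun d _ => hpos c d e x) Finset.univ_nonempty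
  have hαle : ∀ c d, α ≤ B c d / M c d := fun c d => by
    exact Finset.inf'_le
      (fun s : C × D => (∑ e, ∑ y', p s.1 s.2 e x y') /
        (∑ e, ∑ x', ∑ y', p s.1 s.2 e x' y')) (Finset.mem_univ (c, d))
  have hπ_pos : ∀ c d, 0 < B c d / M c d := fun c d => lt_of_lt_of_le hα (hαle c d)
  have hρ_nonneg : ∀ c e, 0 ≤ Ay c e / W c e := fun c e =>
    div_nonneg (Finset.sum_nonneg fun d _ => hp c d e x y) (hW_pos c e).le
  have hρ_le_one : ∀ c e, Ay c e / W c e ≤ 1 := fun c e => by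
    rw [div_le_one (hW_pos c e)]
    exact Finset.sum_le_sum fun d _ =>
      Finset.single_le_sum (fun y' _ => hp c d e x y') (Finset.mem_univ y)
  -- Key bound 1 (from hΔ1)
  have hKey1 : (∑ c, ∑ d, ∑ e, |Bxe c d e * (Ay c e / W c e) - p c d e x y|) ≤ ε := by
    have hnn : ∀ (y' : Y) (x' : X), 0 ≤ ∑ c, ∑ d, ∑ e,
        (∑ d', ∑ y'', p c d' e x' y'') *
          |((∑ d', p c d' e x' y') / (∑ d', ∑ y'', p c d' e x' y'')) *
              ((∑ y'', p c d e x' y'') / (∑ d', ∑ y'', p c d' e x' y'')) -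
            p c d e x' y' / (∑ d', ∑ y'', p c d' e x' y'')| := fun y' x' =>
      Finset.sum_nonneg fun c _ => Finset.sum_nonneg fun d _ =>
        Finset.sum_nonneg fun e _ => mul_nonneg
          (Finset.sum_nonneg fun d' _ => Finset.sum_nonneg fun y'' _ => hp _ _ _ _ _)
          (abs_nonneg _)
    have hslice : (∑ c, ∑ d, ∑ e,
        (∑ d', ∑ y'', p c d' e x y'') *
          |((∑ d', p c d' e x y) / (∑ d', ∑ y'', p c d' e x y'')) *
              ((∑ y'', p c d e x y'') / (∑ d', ∑ y'', p c d' e x y'')) -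
            p c d e x y / (∑ d', ∑ y'', p c d' e x y'')|) ≤ ε := by
      calc _ ≤ ∑ x' : X, ∑ c, ∑ d, ∑ e,
          (∑ d', ∑ y'', p c d' e x' y'') *
            |((∑ d', p c d' e x' y) / (∑ d', ∑ y'', p c d' e x' y'')) *
                ((∑ y'', p c d e x' y'') / (∑ d', ∑ y'', p c d' e x' y'')) -
              p c d e x' y / (∑ d', ∑ y'', p c d' e x' y'')| :=
            Finset.single_le_sum (fun x' _ => hnn y x') (Finset.mem_univ x)
        _ ≤ ∑ y' : Y, ∑ x' : X, ∑ c, ∑ d, ∑ e,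
          (∑ d', ∑ y'', p c d' e x' y'') *
            |((∑ d', p c d' e x' y') / (∑ d', ∑ y'', p c d' e x' y'')) *
                ((∑ y'', p c d e x' y'') / (∑ d', ∑ y'', p c d' e x' y'')) -
              p c d e x' y' / (∑ d', ∑ y'', p c d' e x' y'')| :=
            Finset.single_le_sum
              (fun y' _ => Finset.sum_nonneg fun x' _ => hnn y' x') (Finset.mem_univ y)
        _ ≤ ε := hΔ1
    refine le_trans (le_of_eq ?_) hslice
    refine Finset.sum_congr rfl fun c _ => Finset.sum_congr rfl fun d _ =>
      Finset.sum_congr rfl fun e _ => ?_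
    exact (bamba_slice_abs (W c e) (Ay c e) (Bxe c d e) (p c d e x y) (hW_pos c e)).symm
  -- Key bound 2 (from hΔ2)
  have hKey2 : (∑ c, ∑ d, ∑ e, |Pm c d e * (B c d / M c d) - Bxe c d e|) ≤ ε := by
    have hnn : ∀ (x' : X), 0 ≤ ∑ c, ∑ d, ∑ e,
        (∑ e', ∑ x'', ∑ y', p c d e' x'' y') *
          |((∑ e', ∑ y', p c d e' x' y') / (∑ e', ∑ x'', ∑ y', p c d e' x'' y')) *
              ((∑ x'', ∑ y', p c d e x'' y') / (∑ e', ∑ x'', ∑ y', p c d e' x'' y')) -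
            (∑ y', p c d e x' y') / (∑ e', ∑ x'', ∑ y', p c d e' x'' y')| := fun x' =>
      Finset.sum_nonneg fun c _ => Finset.sum_nonneg fun d _ =>
        Finset.sum_nonneg fun e _ => mul_nonneg
          (Finset.sum_nonneg fun e' _ => Finset.sum_nonneg fun x'' _ =>
            Finset.sum_nonneg fun y' _ => hp _ _ _ _ _)
          (abs_nonneg _)
    have hslice : (∑ c, ∑ d, ∑ e,
        (∑ e', ∑ x'', ∑ y', p c d e' x'' y') *
          |((∑ e', ∑ y', p c d e' x y') / (∑ e', ∑ x'', ∑ y', p c d e' x'' y')) *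
              ((∑ x'', ∑ y', p c d e x'' y') / (∑ e', ∑ x'', ∑ y', p c d e' x'' y')) -
            (∑ y', p c d e x y') / (∑ e', ∑ x'', ∑ y', p c d e' x'' y')|) ≤ ε :=
      le_trans (Finset.single_le_sum (fun x' _ => hnn x') (Finset.mem_univ x)) hΔ2
    refine le_trans (le_of_eq ?_) hslice
    refine Finset.sum_congr rfl fun c _ => Finset.sum_congr rfl fun d _ =>
      Finset.sum_congr rfl fun e _ => ?_
    exact (bamba_slice_abs (M c d) (B c d) (Pm c d e) (Bxe c d e) (hM_pos c d)).symm
  -- rewrite T_S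
  have hTS : (∑ c, ∑ d, ((∑ e, p c d e x y) / (∑ e, ∑ y', p c d e x y')) *
        (∑ e, ∑ x', ∑ y', p c d e x' y'))
      = ∑ c, ∑ d, ∑ e, p c d e x y / (B c d / M c d) := by
    refine Finset.sum_congr rfl fun c _ => Finset.sum_congr rfl fun d _ => ?_
    simp only [hB, hM]
    rw [← Finset.sum_div, div_div_eq_mul_div, div_mul_eq_mul_div]
  -- rewrite T_{S'}
  have hTS' : (∑ c, ∑ e, ((∑ d, p c d e x y) / (∑ d, ∑ y', p c d e x y')) *
        (∑ d, ∑ x', ∑ y', p c d e x' y'))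
      = ∑ c, ∑ d, ∑ e, (Ay c e / W c e) * Pm c d e := by
    refine Finset.sum_congr rfl fun c _ => ?_
    rw [Finset.sum_comm]
    refine Finset.sum_congr rfl fun e _ => ?_
    simp only [hAy, hW, hPm]
    rw [Finset.mul_sum]
  rw [hTS, hTS']
  -- intermediate term Z
  refine le_trans (abs_sub_le _
    (∑ c, ∑ d, ∑ e, Bxe c d e / (B c d / M c d) * (Ay c e / W c e)) _) ?_
  have hb1 : |(∑ c, ∑ d, ∑ e, p c d e x y / (B c d / M c d)) -
      ∑ c, ∑ d, ∑ e, Bxe c d e / (B c d / M c d) * (Ay c e / W c e)| ≤ ε / α := by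
    have h1 : (∑ c, ∑ d, ∑ e, p c d e x y / (B c d / M c d)) -
        (∑ c, ∑ d, ∑ e, Bxe c d e / (B c d / M c d) * (Ay c e / W c e)) =
        ∑ c, ∑ d, ∑ e, (p c d e x y - Bxe c d e * (Ay c e / W c e)) / (B c d / M c d) := by
      rw [← Finset.sum_sub_distrib]
      refine Finset.sum_congr rfl fun c _ => ?_
      rw [← Finset.sum_sub_distrib]
      refine Finset.sum_congr rfl fun d _ => ?_
      rw [← Finset.sum_sub_distrib]
      refine Finset.sum_congr rfl fun e _ => ?_
      rw [sub_div, div_mul_eq_mul_div]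
    rw [h1]
    have h2 : |∑ c, ∑ d, ∑ e,
        (p c d e x y - Bxe c d e * (Ay c e / W c e)) / (B c d / M c d)| ≤
        ∑ c, ∑ d, ∑ e, |Bxe c d e * (Ay c e / W c e) - p c d e x y| / α := by
      refine (Finset.abs_sum_le_sum_abs _ _).trans (Finset.sum_le_sum fun c _ =>
        (Finset.abs_sum_le_sum_abs _ _).trans (Finset.sum_le_sum fun d _ =>
        (Finset.abs_sum_le_sum_abs _ _).trans (Finset.sum_le_sum fun e _ => ?_)))
      rw [abs_div, abs_of_pos (hπ_pos c d), abs_sub_comm]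
      exact div_le_div_of_nonneg_left (abs_nonneg _) hα (hαle c d)
    refine h2.trans ?_
    simp only [← Finset.sum_div]
    exact (div_le_div_iff_of_pos_right hα).mpr hKey1
  have hb2 : |(∑ c, ∑ d, ∑ e, Bxe c d e / (B c d / M c d) * (Ay c e / W c e)) -
      ∑ c, ∑ d, ∑ e, (Ay c e / W c e) * Pm c d e| ≤ ε / α := by
    have h1 : (∑ c, ∑ d, ∑ e, Bxe c d e / (B c d / M c d) * (Ay c e / W c e)) -
        (∑ c, ∑ d, ∑ e, (Ay c e / W c e) * Pm c d e) =
        ∑ c, ∑ d, ∑ e, (Bxe c d e / (B c d / M c d) * (Ay c e / W c e) -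
          (Ay c e / W c e) * Pm c d e) := by
      simp only [← Finset.sum_sub_distrib]
    rw [h1]
    have key : ∀ (π ρ bxe pm : ℝ), π ≠ 0 →
        bxe / π * ρ - ρ * pm = ρ * ((bxe - pm * π) / π) := by
      intros π ρ bxe pm hπ; field_simp
    have h2 : |∑ c, ∑ d, ∑ e, (Bxe c d e / (B c d / M c d) * (Ay c e / W c e) -
          (Ay c e / W c e) * Pm c d e)| ≤
        ∑ c, ∑ d, ∑ e, |Pm c d e * (B c d / M c d) - Bxe c d e| / α := by
      refine (Finset.abs_sum_le_sum_abs _ _).trans (Finset.sum_le_sum fun c _ =>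
        (Finset.abs_sum_le_sum_abs _ _).trans (Finset.sum_le_sum fun d _ =>
        (Finset.abs_sum_le_sum_abs _ _).trans (Finset.sum_le_sum fun e _ => ?_)))
      rw [key _ _ _ _ (hπ_pos c d).ne', abs_mul, abs_of_nonneg (hρ_nonneg c e), abs_div,
        abs_of_pos (hπ_pos c d), abs_sub_comm (Bxe c d e)]
      calc (Ay c e / W c e) * (|Pm c d e * (B c d / M c d) - Bxe c d e| / (B c d / M c d))
          ≤ 1 * (|Pm c d e * (B c d / M c d) - Bxe c d e| / α) := by
            refine mul_le_mul (hρ_le_one c e) ?_ ?_ zero_le_one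
            · exact div_le_div_of_nonneg_left (abs_nonneg _) hα (hαle c d)
            · exact div_nonneg (abs_nonneg _) (hπ_pos c d).le
        _ = |Pm c d e * (B c d / M c d) - Bxe c d e| / α := one_mul _
    refine h2.trans ?_
    simp only [← Finset.sum_div]
    exact (div_le_div_iff_of_pos_right hα).mpr hKey2
  calc _ ≤ ε / α + ε / α := add_le_add hb1 hb2
    _ = 2 * ε / α := by ring
end
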